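/- arXiv:2004.01035 — 4 statements merged into one kernel-verified Lean document; each statement's English description precedes it below -/
import Mathlib

section
/- For a nondegenerate model of walk, the kernel curve Ē_t has a singular point if and only if there exists ([a:b],[c:d]) ∈ Ē_t such that Δ₁ has a double root at [a:b] and Δ₂ has a double root at [c:d]. -/
open MvPolynomial

noncomputable section

variable (d : ℤ → ℤ → ℝ) (t : ℝ)

/-- The kernel polynomial `K(x,y,t) = xy(1 - t·Σ_{(i,j)∈{-1,0,1}²} d_{i,j} x^i y^j)`
as an element of `ℂ[x,y] = MvPolynomial (Fin 2) ℂ` (variable `0` is `x`, variable `1` is `y`). -/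
def kernelK : MvPolynomial (Fin 2) ℂ :=
  X 0 * X 1 - C ((t : ℝ) : ℂ) *
    ∑ i ∈ Finset.range 3, ∑ j ∈ Finset.range 3,
      C ((d ((i : ℤ) - 1) ((j : ℤ) - 1) : ℝ) : ℂ) * X 0 ^ i * X 1 ^ j

/-- The standing hypotheses: the weights `d_{i,j}` for `(i,j) ∈ {-1,0,1}²` lie in `[0,1]`
and sum to `1`, `t ∈ (0,1)`, and `t` is transcendental over `ℚ(d_{i,j})`, i.e. no nonzero
polynomial with coefficients in the subfield of `ℝ` generated by the `d_{i,j}` vanishes at `t`. -/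
def WalkHyp : Prop :=
  (∀ i ∈ ({-1, 0, 1} : Set ℤ), ∀ j ∈ ({-1, 0, 1} : Set ℤ), 0 ≤ d i j ∧ d i j ≤ 1) ∧
  (∑ i ∈ ({-1, 0, 1} : Finset ℤ), ∑ j ∈ ({-1, 0, 1} : Finset ℤ), d i j = 1) ∧
  (0 < t ∧ t < 1) ∧
  (∀ p : Polynomial ℝ,
      (∀ n, p.coeff n ∈
        Subfield.closure
          {x : ℝ | ∃ i ∈ ({-1, 0, 1} : Set ℤ), ∃ j ∈ ({-1, 0, 1} : Set ℤ), x = d i j}) →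
      Polynomial.eval t p = 0 → p = 0)

/-- The model is degenerate if `K` is reducible in `ℂ[x,y]`, or has degree `≤ 1` in `x`,
or degree `≤ 1` in `y`. -/
def Degenerate : Prop :=
  ¬ Irreducible (kernelK d t) ∨
    degreeOf 0 (kernelK d t) ≤ 1 ∨ degreeOf 1 (kernelK d t) ≤ 1

/-- The bihomogenized kernel
`K̄(x₀,x₁,y₀,y₁) = x₀x₁y₀y₁ - t Σ_{i,j=0}^{2} d_{i-1,j-1} x₀^i x₁^{2-i} y₀^j y₁^{2-j}`,
with variables `0 ↦ x₀`, `1 ↦ x₁`, `2 ↦ y₀`, `3 ↦ y₁`. -/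
def kernelKbar : MvPolynomial (Fin 4) ℂ :=
  X 0 * X 1 * X 2 * X 3 - C ((t : ℝ) : ℂ) *
    ∑ i ∈ Finset.range 3, ∑ j ∈ Finset.range 3,
      C ((d ((i : ℤ) - 1) ((j : ℤ) - 1) : ℝ) : ℂ) *
        X 0 ^ i * X 1 ^ (2 - i) * X 2 ^ j * X 3 ^ (2 - j)

/-- `([a:b],[c:e])` lies on the kernel curve `Ē_t ⊆ ℙ¹(ℂ)×ℙ¹(ℂ)`. -/
def OnKernelCurve (a b c e : ℂ) : Prop :=
  eval ![a, b, c, e] (kernelKbar d t) = 0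

/-- `([a:b],[c:e])` is a singular point of the kernel curve `Ē_t`: it lies on `Ē_t`
and all four partial derivatives of `K̄` vanish there. -/
def SingularAt (a b c e : ℂ) : Prop :=
  OnKernelCurve d t a b c e ∧
    ∀ k : Fin 4, eval ![a, b, c, e] (pderiv k (kernelKbar d t)) = 0

/-- `Ā₁(x₀,x₁)`: the coefficient of `y₀²` in `K̄`. -/
def Abar1 : MvPolynomial (Fin 2) ℂ :=
  -(C ((t : ℝ) : ℂ)) *
    (C ((d (-1) 1 : ℝ) : ℂ) * X 1 ^ 2 + C ((d 0 1 : ℝ) : ℂ) * X 0 * X 1 +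
      C ((d 1 1 : ℝ) : ℂ) * X 0 ^ 2)

/-- `B̄₁(x₀,x₁)`: the coefficient of `y₀y₁` in `K̄`. -/
def Bbar1 : MvPolynomial (Fin 2) ℂ :=
  X 0 * X 1 - C ((t : ℝ) : ℂ) *
    (C ((d (-1) 0 : ℝ) : ℂ) * X 1 ^ 2 + C ((d 0 0 : ℝ) : ℂ) * X 0 * X 1 +
      C ((d 1 0 : ℝ) : ℂ) * X 0 ^ 2)

/-- `C̄₁(x₀,x₁)`: the coefficient of `y₁²` in `K̄`. -/
def Cbar1 : MvPolynomial (Fin 2) ℂ :=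
  -(C ((t : ℝ) : ℂ)) *
    (C ((d (-1) (-1) : ℝ) : ℂ) * X 1 ^ 2 + C ((d 0 (-1) : ℝ) : ℂ) * X 0 * X 1 +
      C ((d 1 (-1) : ℝ) : ℂ) * X 0 ^ 2)

/-- The discriminant `Δ₁(x₀,x₁) = B̄₁² - 4Ā₁C̄₁`, homogeneous of degree 4. -/
def Delta1 : MvPolynomial (Fin 2) ℂ :=
  Bbar1 d t ^ 2 - 4 * Abar1 d t * Cbar1 d t

/-- `Ā₂(y₀,y₁)`: the coefficient of `x₀²` in `K̄`. -/
def Abar2 : MvPolynomial (Fin 2) ℂ :=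
  -(C ((t : ℝ) : ℂ)) *
    (C ((d 1 (-1) : ℝ) : ℂ) * X 1 ^ 2 + C ((d 1 0 : ℝ) : ℂ) * X 0 * X 1 +
      C ((d 1 1 : ℝ) : ℂ) * X 0 ^ 2)

/-- `B̄₂(y₀,y₁)`: the coefficient of `x₀x₁` in `K̄`. -/
def Bbar2 : MvPolynomial (Fin 2) ℂ :=
  X 0 * X 1 - C ((t : ℝ) : ℂ) *
    (C ((d 0 (-1) : ℝ) : ℂ) * X 1 ^ 2 + C ((d 0 0 : ℝ) : ℂ) * X 0 * X 1 +
      C ((d 0 1 : ℝ) : ℂ) * X 0 ^ 2)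

/-- `C̄₂(y₀,y₁)`: the coefficient of `x₁²` in `K̄`. -/
def Cbar2 : MvPolynomial (Fin 2) ℂ :=
  -(C ((t : ℝ) : ℂ)) *
    (C ((d (-1) (-1) : ℝ) : ℂ) * X 1 ^ 2 + C ((d (-1) 0 : ℝ) : ℂ) * X 0 * X 1 +
      C ((d (-1) 1 : ℝ) : ℂ) * X 0 ^ 2)

/-- The discriminant `Δ₂(y₀,y₁) = B̄₂² - 4Ā₂C̄₂`, homogeneous of degree 4. -/
def Delta2 : MvPolynomial (Fin 2) ℂ :=
  Bbar2 d t ^ 2 - 4 * Abar2 d t * Cbar2 d t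

/-- `[a:b] ∈ ℙ¹(ℂ)` is a double root of the homogeneous polynomial `p`:
`(bX - aY)²` divides `p(X,Y)`. -/
def IsDoubleRootAt (a b : ℂ) (p : MvPolynomial (Fin 2) ℂ) : Prop :=
  (C b * X 0 - C a * X 1) ^ 2 ∣ p

/-- The step set of the model is included in a closed half plane whose boundary passes
through the origin. -/
def StepSetInHalfPlane : Prop :=
  ∃ u v : ℝ, (u, v) ≠ (0, 0) ∧
    ∀ i ∈ ({-1, 0, 1} : Set ℤ), ∀ j ∈ ({-1, 0, 1} : Set ℤ),
      (i, j) ≠ (0, 0) → d i j ≠ 0 → 0 ≤ u * (i : ℝ) + v * (j : ℝ)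

/-- `α₂ = β₂` for the first family of (G0). -/
def alpha2 : ℝ := 1 - 2*t*(d 0 0) + t^2*(d 0 0)^2 - 4*t^2*(d (-1) 1)*(d 1 (-1))

/-- `α₃` for the first family of (G0). -/
def alpha3 : ℝ := 2*t^2*(d 1 0)*(d 0 0) - 2*t*(d 1 0) - 4*t^2*(d 0 1)*(d 1 (-1))

/-- `α₄` for the first family of (G0). -/
def alpha4 : ℝ := t^2*((d 1 0)^2 - 4*(d 1 1)*(d 1 (-1)))

/-- `β₃` for the first family of (G0). -/
def beta3 : ℝ := 2*t^2*(d 0 1)*(d 0 0) - 2*t*(d 0 1) - 4*t^2*(d 1 0)*(d (-1) 1)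

/-- `β₄` for the first family of (G0). -/
def beta4 : ℝ := t^2*((d 0 1)^2 - 4*(d 1 1)*(d (-1) 1))

/-- The kernel polynomial as a function `ℂ × ℂ → ℂ`:
`K(x,y,t) = xy - t Σ_{i,j=0}^{2} d_{i-1,j-1} x^i y^j`. -/
def kernelKfun (x y : ℂ) : ℂ :=
  x * y - ((t : ℝ) : ℂ) *
    ∑ i ∈ Finset.range 3, ∑ j ∈ Finset.range 3,
      ((d ((i : ℤ) - 1) ((j : ℤ) - 1) : ℝ) : ℂ) * x ^ i * y ^ j


-- ===== auxiliary lemmas =====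

lemma S1' (A B Cc c e : ℂ) (h2 : 2*A*c + B*e = 0) (h3 : B*c + 2*Cc*e = 0)
    (hce : ¬(c = 0 ∧ e = 0)) : B^2 - 4*A*Cc = 0 := by
  have hc : (B^2-4*A*Cc)*c = 0 := by linear_combination B*h3 - 2*Cc*h2
  have he : (B^2-4*A*Cc)*e = 0 := by linear_combination B*h2 - 2*A*h3
  rcases mul_eq_zero.1 hc with h|h
  · exact h
  rcases mul_eq_zero.1 he with h'|h'
  · exact h'
  exact absurd ⟨h, h'⟩ hce

lemma S2' (A B Cc A' B' C' c e : ℂ) (h2 : 2*A*c+B*e=0) (h3 : B*c+2*Cc*e=0)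
    (hP : A'*c^2+B'*c*e+C'*e^2 = 0) (hce : ¬(c = 0 ∧ e = 0)) :
    2*B*B' - 4*A'*Cc - 4*A*C' = 0 := by
  have he2 : (2*B*B'-4*A'*Cc-4*A*C')*e^2 = 0 := by
    linear_combination (2*B'*e+2*A'*c)*h2 - 2*A'*e*h3 - 4*A*hP
  have hc2 : (2*B*B'-4*A'*Cc-4*A*C')*c^2 = 0 := by
    linear_combination (2*B'*c+2*C'*e)*h3 - 2*C'*c*h2 - 4*Cc*hP
  rcases mul_eq_zero.1 he2 with h|h
  · exact h
  rcases mul_eq_zero.1 hc2 with h'|h'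
  · exact h'
  exact absurd ⟨pow_eq_zero_iff two_ne_zero |>.1 h', pow_eq_zero_iff two_ne_zero |>.1 h⟩ hce

lemma S3' (A B Cc c e : ℂ) (hd : B^2 - 4*A*Cc = 0) (h0 : A*c^2 + B*c*e + Cc*e^2 = 0) :
    2*A*c + B*e = 0 ∧ B*c + 2*Cc*e = 0 := by
  constructor
  · have h : (2*A*c+B*e)^2 = 0 := by linear_combination 4*A*h0 + e^2*hd
    exact pow_eq_zero_iff two_ne_zero |>.1 h
  · have h : (B*c+2*Cc*e)^2 = 0 := by linear_combination 4*Cc*h0 + c^2*hd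
    exact pow_eq_zero_iff two_ne_zero |>.1 h

lemma eval_quartic' (q0 q1 q2 q3 q4 a b : ℂ) :
    eval ![a,b] (C q4 * X 0^4 + C q3 * X 0^3 * X 1 + C q2 * X 0^2 * X 1^2
      + C q1 * X 0 * X 1^3 + C q0 * X 1^4 : MvPolynomial (Fin 2) ℂ)
      = q4*a^4 + q3*a^3*b + q2*a^2*b^2 + q1*a*b^3 + q0*b^4 := by
  simp

lemma eval_pd0_quartic' (q0 q1 q2 q3 q4 a b : ℂ) :
    eval ![a,b] (pderiv 0 (C q4 * X 0^4 + C q3 * X 0^3 * X 1 + C q2 * X 0^2 * X 1^2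
      + C q1 * X 0 * X 1^3 + C q0 * X 1^4 : MvPolynomial (Fin 2) ℂ))
      = 4*q4*a^3 + 3*q3*a^2*b + 2*q2*a*b^2 + q1*b^3 := by
  simp [pderiv_mul, pderiv_pow, pderiv_X_self, pderiv_X_of_ne]
  ring

lemma eval_pd1_quartic' (q0 q1 q2 q3 q4 a b : ℂ) :
    eval ![a,b] (pderiv 1 (C q4 * X 0^4 + C q3 * X 0^3 * X 1 + C q2 * X 0^2 * X 1^2
      + C q1 * X 0 * X 1^3 + C q0 * X 1^4 : MvPolynomial (Fin 2) ℂ))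
      = q3*a^3 + 2*q2*a^2*b + 3*q1*a*b^2 + 4*q0*b^3 := by
  simp [pderiv_mul, pderiv_pow, pderiv_X_self, pderiv_X_of_ne]
  ring

lemma quartic_dvd' (q0 q1 q2 q3 q4 a b : ℂ) (hab : ¬(a = 0 ∧ b = 0))
    (hF : q4*a^4 + q3*a^3*b + q2*a^2*b^2 + q1*a*b^3 + q0*b^4 = 0)
    (hD0 : 4*q4*a^3 + 3*q3*a^2*b + 2*q2*a*b^2 + q1*b^3 = 0)
    (hD1 : q3*a^3 + 2*q2*a^2*b + 3*q1*a*b^2 + 4*q0*b^3 = 0) :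
    (C b * X 0 - C a * X 1)^2 ∣ (C q4 * X 0^4 + C q3 * X 0^3 * X 1 + C q2 * X 0^2 * X 1^2
      + C q1 * X 0 * X 1^3 + C q0 * X 1^4 : MvPolynomial (Fin 2) ℂ) := by
  by_cases hb : b = 0
  · have ha : a ≠ 0 := fun h => hab ⟨h, hb⟩
    subst hb
    have hq4 : q4 = 0 := by
      have h : q4 * a^4 = 0 := by linear_combination hF
      rcases mul_eq_zero.1 h with h'|h'
      · exact h'
      · exact absurd (pow_eq_zero_iff (by norm_num) |>.1 h') ha
    have hq3 : q3 = 0 := by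
      have h : q3 * a^3 = 0 := by linear_combination hD1
      rcases mul_eq_zero.1 h with h'|h'
      · exact h'
      · exact absurd (pow_eq_zero_iff (by norm_num) |>.1 h') ha
    subst hq4 hq3
    refine ⟨C (a⁻¹)^2 * (C q2 * X 0^2 + C q1 * X 0 * X 1 + C q0 * X 1^2), ?_⟩
    have h1 : (C a * C a⁻¹ : MvPolynomial (Fin 2) ℂ) = 1 := by
      rw [← map_mul, mul_inv_cancel₀ ha, map_one]
    simp only [map_zero, zero_mul, zero_sub]
    linear_combination (-((C a * C a⁻¹ + 1) * X 1^2 *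
      (C q2 * X 0^2 + C q1 * X 0 * X 1 + C q0 * X 1^2))) * h1
  · have hF' := congrArg (C : ℂ →+* MvPolynomial (Fin 2) ℂ) hF
    have hD0' := congrArg (C : ℂ →+* MvPolynomial (Fin 2) ℂ) hD0
    simp only [map_add, map_mul, map_pow, map_ofNat, map_zero] at hF' hD0'
    have h1 : (C b * C b⁻¹ : MvPolynomial (Fin 2) ℂ) = 1 := by
      rw [← map_mul, mul_inv_cancel₀ hb, map_one]
    refine ⟨C (b⁻¹)^4 * (C q4 * C b^2 * X 0^2
      + (C q3 * C b^2 + 2 * C a * C b * C q4) * X 0 * X 1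
      + (C q2 * C b^2 + 2 * C a * C b * C q3 + 3 * C a^2 * C q4) * X 1^2), ?_⟩
    set P : MvPolynomial (Fin 2) ℂ := C q4 * X 0^4 + C q3 * X 0^3 * X 1 + C q2 * X 0^2 * X 1^2
      + C q1 * X 0 * X 1^3 + C q0 * X 1^4 with hP
    linear_combination (-(P * (1 + C b * C b⁻¹ + (C b * C b⁻¹)^2 + (C b * C b⁻¹)^3))) * h1
      + (C b⁻¹^4 * (C b * X 0 * X 1^3 - C a * X 1^4)) * hD0'
      + (C b⁻¹^4 * X 1^4) * hF'

lemma eval_zero_of_sq_dvd' (a b : ℂ) (p : MvPolynomial (Fin 2) ℂ)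
    (h : (C b * X 0 - C a * X 1)^2 ∣ p) : eval ![a,b] p = 0 := by
  obtain ⟨w, rfl⟩ := h
  simp [mul_comm]

lemma quad_shape_rep' (A B Cc : MvPolynomial (Fin 2) ℂ) (a0 a1 a2 b0 b1 b2 c0 c1 c2 : ℂ)
    (hA : A = C a2 * X 0^2 + C a1 * X 0 * X 1 + C a0 * X 1^2)
    (hB : B = C b2 * X 0^2 + C b1 * X 0 * X 1 + C b0 * X 1^2)
    (hC : Cc = C c2 * X 0^2 + C c1 * X 0 * X 1 + C c0 * X 1^2) :
    ∃ q0 q1 q2 q3 q4 : ℂ, B^2 - 4*A*Cc = C q4 * X 0^4 + C q3 * X 0^3 * X 1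
      + C q2 * X 0^2 * X 1^2 + C q1 * X 0 * X 1^3 + C q0 * X 1^4 :=
  ⟨b0^2-4*a0*c0, 2*b1*b0-4*(a1*c0+a0*c1), b1^2+2*b2*b0-4*(a2*c0+a1*c1+a0*c2),
    2*b2*b1-4*(a2*c1+a1*c2), b2^2-4*a2*c2, by
      subst hA hB hC
      simp only [map_sub, map_add, map_mul, map_pow, map_ofNat]
      ring⟩

lemma Delta1_rep : ∃ q0 q1 q2 q3 q4 : ℂ, Delta1 d t = C q4 * X 0^4 + C q3 * X 0^3 * X 1
    + C q2 * X 0^2 * X 1^2 + C q1 * X 0 * X 1^3 + C q0 * X 1^4 := by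
  apply quad_shape_rep' (Abar1 d t) (Bbar1 d t) (Cbar1 d t)
    (-(((t:ℝ):ℂ) * ((d (-1) 1 : ℝ):ℂ))) (-(((t:ℝ):ℂ) * ((d 0 1 : ℝ):ℂ)))
    (-(((t:ℝ):ℂ) * ((d 1 1 : ℝ):ℂ)))
    (-(((t:ℝ):ℂ) * ((d (-1) 0 : ℝ):ℂ))) (1-(((t:ℝ):ℂ) * ((d 0 0 : ℝ):ℂ)))
    (-(((t:ℝ):ℂ) * ((d 1 0 : ℝ):ℂ)))
    (-(((t:ℝ):ℂ) * ((d (-1) (-1) : ℝ):ℂ))) (-(((t:ℝ):ℂ) * ((d 0 (-1) : ℝ):ℂ)))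
    (-(((t:ℝ):ℂ) * ((d 1 (-1) : ℝ):ℂ)))
  · simp only [Abar1, map_neg, map_mul, map_sub, map_one]; ring
  · simp only [Bbar1, map_neg, map_mul, map_sub, map_one]; ring
  · simp only [Cbar1, map_neg, map_mul, map_sub, map_one]; ring

lemma Delta2_rep : ∃ q0 q1 q2 q3 q4 : ℂ, Delta2 d t = C q4 * X 0^4 + C q3 * X 0^3 * X 1
    + C q2 * X 0^2 * X 1^2 + C q1 * X 0 * X 1^3 + C q0 * X 1^4 := by
  apply quad_shape_rep' (Abar2 d t) (Bbar2 d t) (Cbar2 d t)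
    (-(((t:ℝ):ℂ) * ((d 1 (-1) : ℝ):ℂ))) (-(((t:ℝ):ℂ) * ((d 1 0 : ℝ):ℂ)))
    (-(((t:ℝ):ℂ) * ((d 1 1 : ℝ):ℂ)))
    (-(((t:ℝ):ℂ) * ((d 0 (-1) : ℝ):ℂ))) (1-(((t:ℝ):ℂ) * ((d 0 0 : ℝ):ℂ)))
    (-(((t:ℝ):ℂ) * ((d 0 1 : ℝ):ℂ)))
    (-(((t:ℝ):ℂ) * ((d (-1) (-1) : ℝ):ℂ))) (-(((t:ℝ):ℂ) * ((d (-1) 0 : ℝ):ℂ)))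
    (-(((t:ℝ):ℂ) * ((d (-1) 1 : ℝ):ℂ)))
  · simp only [Abar2, map_neg, map_mul, map_sub, map_one]; ring
  · simp only [Bbar2, map_neg, map_mul, map_sub, map_one]; ring
  · simp only [Cbar2, map_neg, map_mul, map_sub, map_one]; ring

lemma pd_four' (k : Fin 2) : pderiv k (4 : MvPolynomial (Fin 2) ℂ) = 0 := by
  rw [show (4 : MvPolynomial (Fin 2) ℂ) = C 4 from (map_ofNat C 4).symm, pderiv_C]

section evalfacts
variable (a b c e : ℂ)

lemma evalK_1 : eval ![a,b,c,e] (kernelKbar d t) =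
    (eval ![a,b] (Abar1 d t))*c^2 + (eval ![a,b] (Bbar1 d t))*c*e + (eval ![a,b] (Cbar1 d t))*e^2 := by
  simp [kernelKbar, Abar1, Bbar1, Cbar1, Finset.sum_range_succ]; ring

lemma evalK_2 : eval ![a,b,c,e] (kernelKbar d t) =
    (eval ![c,e] (Abar2 d t))*a^2 + (eval ![c,e] (Bbar2 d t))*a*b + (eval ![c,e] (Cbar2 d t))*b^2 := by
  simp [kernelKbar, Abar2, Bbar2, Cbar2, Finset.sum_range_succ]; ring

lemma evalPd0_y : eval ![a,b,c,e] (pderiv 0 (kernelKbar d t)) =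
    2*(eval ![c,e] (Abar2 d t))*a + (eval ![c,e] (Bbar2 d t))*b := by
  simp [kernelKbar, Abar2, Bbar2, Finset.sum_range_succ, pderiv_mul, pderiv_pow,
    pderiv_X_self, pderiv_X_of_ne]; ring

lemma evalPd1_y : eval ![a,b,c,e] (pderiv 1 (kernelKbar d t)) =
    (eval ![c,e] (Bbar2 d t))*a + 2*(eval ![c,e] (Cbar2 d t))*b := by
  simp [kernelKbar, Bbar2, Cbar2, Finset.sum_range_succ, pderiv_mul, pderiv_pow,
    pderiv_X_self, pderiv_X_of_ne]; ring

lemma evalPd2_x : eval ![a,b,c,e] (pderiv 2 (kernelKbar d t)) =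
    2*(eval ![a,b] (Abar1 d t))*c + (eval ![a,b] (Bbar1 d t))*e := by
  simp [kernelKbar, Abar1, Bbar1, Finset.sum_range_succ, pderiv_mul, pderiv_pow,
    pderiv_X_self, pderiv_X_of_ne]; ring

lemma evalPd3_x : eval ![a,b,c,e] (pderiv 3 (kernelKbar d t)) =
    (eval ![a,b] (Bbar1 d t))*c + 2*(eval ![a,b] (Cbar1 d t))*e := by
  simp [kernelKbar, Bbar1, Cbar1, Finset.sum_range_succ, pderiv_mul, pderiv_pow,
    pderiv_X_self, pderiv_X_of_ne]; ring

lemma evalPd0_x : eval ![a,b,c,e] (pderiv 0 (kernelKbar d t)) =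
    (eval ![a,b] (pderiv 0 (Abar1 d t)))*c^2 + (eval ![a,b] (pderiv 0 (Bbar1 d t)))*c*e
      + (eval ![a,b] (pderiv 0 (Cbar1 d t)))*e^2 := by
  simp [kernelKbar, Abar1, Bbar1, Cbar1, Finset.sum_range_succ, pderiv_mul, pderiv_pow,
    pderiv_X_self, pderiv_X_of_ne]; ring

lemma evalPd1_x : eval ![a,b,c,e] (pderiv 1 (kernelKbar d t)) =
    (eval ![a,b] (pderiv 1 (Abar1 d t)))*c^2 + (eval ![a,b] (pderiv 1 (Bbar1 d t)))*c*e
      + (eval ![a,b] (pderiv 1 (Cbar1 d t)))*e^2 := by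
  simp [kernelKbar, Abar1, Bbar1, Cbar1, Finset.sum_range_succ, pderiv_mul, pderiv_pow,
    pderiv_X_self, pderiv_X_of_ne]; ring

lemma evalPd2_y : eval ![a,b,c,e] (pderiv 2 (kernelKbar d t)) =
    (eval ![c,e] (pderiv 0 (Abar2 d t)))*a^2 + (eval ![c,e] (pderiv 0 (Bbar2 d t)))*a*b
      + (eval ![c,e] (pderiv 0 (Cbar2 d t)))*b^2 := by
  simp [kernelKbar, Abar2, Bbar2, Cbar2, Finset.sum_range_succ, pderiv_mul, pderiv_pow,
    pderiv_X_self, pderiv_X_of_ne]; ring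

lemma evalPd3_y : eval ![a,b,c,e] (pderiv 3 (kernelKbar d t)) =
    (eval ![c,e] (pderiv 1 (Abar2 d t)))*a^2 + (eval ![c,e] (pderiv 1 (Bbar2 d t)))*a*b
      + (eval ![c,e] (pderiv 1 (Cbar2 d t)))*b^2 := by
  simp [kernelKbar, Abar2, Bbar2, Cbar2, Finset.sum_range_succ, pderiv_mul, pderiv_pow,
    pderiv_X_self, pderiv_X_of_ne]; ring

lemma evalDelta1 : eval ![a,b] (Delta1 d t) =
    (eval ![a,b] (Bbar1 d t))^2 - 4*(eval ![a,b] (Abar1 d t))*(eval ![a,b] (Cbar1 d t)) := by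
  simp [Delta1]

lemma evalPd0Delta1 : eval ![a,b] (pderiv 0 (Delta1 d t)) =
    2*(eval ![a,b] (Bbar1 d t))*(eval ![a,b] (pderiv 0 (Bbar1 d t)))
      - 4*(eval ![a,b] (pderiv 0 (Abar1 d t)))*(eval ![a,b] (Cbar1 d t))
      - 4*(eval ![a,b] (Abar1 d t))*(eval ![a,b] (pderiv 0 (Cbar1 d t))) := by
  simp [Delta1, Abar1, Bbar1, Cbar1, pderiv_mul, pderiv_pow, pderiv_X_self,
    pderiv_X_of_ne, pd_four']; ring

lemma evalPd1Delta1 : eval ![a,b] (pderiv 1 (Delta1 d t)) =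
    2*(eval ![a,b] (Bbar1 d t))*(eval ![a,b] (pderiv 1 (Bbar1 d t)))
      - 4*(eval ![a,b] (pderiv 1 (Abar1 d t)))*(eval ![a,b] (Cbar1 d t))
      - 4*(eval ![a,b] (Abar1 d t))*(eval ![a,b] (pderiv 1 (Cbar1 d t))) := by
  simp [Delta1, Abar1, Bbar1, Cbar1, pderiv_mul, pderiv_pow, pderiv_X_self,
    pderiv_X_of_ne, pd_four']; ring

lemma evalDelta2 : eval ![c,e] (Delta2 d t) =
    (eval ![c,e] (Bbar2 d t))^2 - 4*(eval ![c,e] (Abar2 d t))*(eval ![c,e] (Cbar2 d t)) := by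
  simp [Delta2]

lemma evalPd0Delta2 : eval ![c,e] (pderiv 0 (Delta2 d t)) =
    2*(eval ![c,e] (Bbar2 d t))*(eval ![c,e] (pderiv 0 (Bbar2 d t)))
      - 4*(eval ![c,e] (pderiv 0 (Abar2 d t)))*(eval ![c,e] (Cbar2 d t))
      - 4*(eval ![c,e] (Abar2 d t))*(eval ![c,e] (pderiv 0 (Cbar2 d t))) := by
  simp [Delta2, Abar2, Bbar2, Cbar2, pderiv_mul, pderiv_pow, pderiv_X_self,
    pderiv_X_of_ne, pd_four']; ring

lemma evalPd1Delta2 : eval ![c,e] (pderiv 1 (Delta2 d t)) =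
    2*(eval ![c,e] (Bbar2 d t))*(eval ![c,e] (pderiv 1 (Bbar2 d t)))
      - 4*(eval ![c,e] (pderiv 1 (Abar2 d t)))*(eval ![c,e] (Cbar2 d t))
      - 4*(eval ![c,e] (Abar2 d t))*(eval ![c,e] (pderiv 1 (Cbar2 d t))) := by
  simp [Delta2, Abar2, Bbar2, Cbar2, pderiv_mul, pderiv_pow, pderiv_X_self,
    pderiv_X_of_ne, pd_four']; ring

end evalfacts


/-- for a nondegenerate model, `Ē_t` has a singular point if and only if
there is a point `([a:b],[c:e]) ∈ Ē_t` such that `Δ₁` has a double root at `[a:b]`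
and `Δ₂` has a double root at `[c:e]`. -/
theorem singular_iff_double_roots (h : WalkHyp d t) (hnd : ¬ Degenerate d t) :
    (∃ a b c e : ℂ, (a, b) ≠ (0, 0) ∧ (c, e) ≠ (0, 0) ∧ SingularAt d t a b c e) ↔
      (∃ a b c e : ℂ, (a, b) ≠ (0, 0) ∧ (c, e) ≠ (0, 0) ∧ OnKernelCurve d t a b c e ∧
        IsDoubleRootAt a b (Delta1 d t) ∧ IsDoubleRootAt c e (Delta2 d t)) := by
  constructor
  · rintro ⟨a, b, c, e, hab, hce, honc, hpd⟩
    have hab' : ¬(a = 0 ∧ b = 0) := by simpa [Prod.ext_iff] using hab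
    have hce' : ¬(c = 0 ∧ e = 0) := by simpa [Prod.ext_iff] using hce
    have h0 : eval ![a,b,c,e] (kernelKbar d t) = 0 := honc
    have E0x := (evalK_1 d t a b c e).symm.trans h0
    have E0y := (evalK_2 d t a b c e).symm.trans h0
    have E2 := (evalPd2_x d t a b c e).symm.trans (hpd 2)
    have E3 := (evalPd3_x d t a b c e).symm.trans (hpd 3)
    have F0 := (evalPd0_x d t a b c e).symm.trans (hpd 0)
    have F1 := (evalPd1_x d t a b c e).symm.trans (hpd 1)
    have G2 := (evalPd0_y d t a b c e).symm.trans (hpd 0)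
    have G3 := (evalPd1_y d t a b c e).symm.trans (hpd 1)
    have H2 := (evalPd2_y d t a b c e).symm.trans (hpd 2)
    have H3 := (evalPd3_y d t a b c e).symm.trans (hpd 3)
    -- double root of Delta1 at [a:b]
    obtain ⟨q0, q1, q2, q3, q4, hrep⟩ := Delta1_rep d t
    have hd1 : eval ![a,b] (Delta1 d t) = 0 := by
      rw [evalDelta1]; exact S1' _ _ _ _ _ E2 E3 hce'
    have hd1p0 : eval ![a,b] (pderiv 0 (Delta1 d t)) = 0 := by
      rw [evalPd0Delta1]; exact S2' _ _ _ _ _ _ _ _ E2 E3 F0 hce'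
    have hd1p1 : eval ![a,b] (pderiv 1 (Delta1 d t)) = 0 := by
      rw [evalPd1Delta1]; exact S2' _ _ _ _ _ _ _ _ E2 E3 F1 hce'
    rw [hrep, eval_quartic'] at hd1
    rw [hrep, eval_pd0_quartic'] at hd1p0
    rw [hrep, eval_pd1_quartic'] at hd1p1
    have dr1 : IsDoubleRootAt a b (Delta1 d t) := by
      show (C b * X 0 - C a * X 1)^2 ∣ Delta1 d t
      rw [hrep]
      exact quartic_dvd' _ _ _ _ _ _ _ hab' hd1 hd1p0 hd1p1
    -- double root of Delta2 at [c:e]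
    obtain ⟨p0, p1, p2, p3, p4, hrep2⟩ := Delta2_rep d t
    have hd2 : eval ![c,e] (Delta2 d t) = 0 := by
      rw [evalDelta2]; exact S1' _ _ _ _ _ G2 G3 hab'
    have hd2p0 : eval ![c,e] (pderiv 0 (Delta2 d t)) = 0 := by
      rw [evalPd0Delta2]; exact S2' _ _ _ _ _ _ _ _ G2 G3 H2 hab'
    have hd2p1 : eval ![c,e] (pderiv 1 (Delta2 d t)) = 0 := by
      rw [evalPd1Delta2]; exact S2' _ _ _ _ _ _ _ _ G2 G3 H3 hab'
    rw [hrep2, eval_quartic'] at hd2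
    rw [hrep2, eval_pd0_quartic'] at hd2p0
    rw [hrep2, eval_pd1_quartic'] at hd2p1
    have dr2 : IsDoubleRootAt c e (Delta2 d t) := by
      show (C e * X 0 - C c * X 1)^2 ∣ Delta2 d t
      rw [hrep2]
      exact quartic_dvd' _ _ _ _ _ _ _ hce' hd2 hd2p0 hd2p1
    exact ⟨a, b, c, e, hab, hce, honc, dr1, dr2⟩
  · rintro ⟨a, b, c, e, hab, hce, honc, hdr1, hdr2⟩
    refine ⟨a, b, c, e, hab, hce, honc, ?_⟩
    have h0 : eval ![a,b,c,e] (kernelKbar d t) = 0 := honc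
    have hd1 : eval ![a,b] (Delta1 d t) = 0 := eval_zero_of_sq_dvd' _ _ _ hdr1
    have hd2 : eval ![c,e] (Delta2 d t) = 0 := eval_zero_of_sq_dvd' _ _ _ hdr2
    rw [evalDelta1] at hd1
    rw [evalDelta2] at hd2
    have E0x := (evalK_1 d t a b c e).symm.trans h0
    have E0y := (evalK_2 d t a b c e).symm.trans h0
    obtain ⟨hy0, hy1⟩ := S3' _ _ _ _ _ hd1 E0x
    obtain ⟨hx0, hx1⟩ := S3' _ _ _ _ _ hd2 E0y
    intro k
    fin_cases k
    · rw [show ((⟨0, by norm_num⟩ : Fin 4)) = (0 : Fin 4) from rfl, evalPd0_y]; exact hx0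
    · rw [show ((⟨1, by norm_num⟩ : Fin 4)) = (1 : Fin 4) from rfl, evalPd1_y]; exact hx1
    · rw [show ((⟨2, by norm_num⟩ : Fin 4)) = (2 : Fin 4) from rfl, evalPd2_x]; exact hy0
    · rw [show ((⟨3, by norm_num⟩ : Fin 4)) = (3 : Fin 4) from rfl, evalPd3_x]; exact hy1


end
end

section
/- Assume the model is nondegenerate and in the first family of (G0), i.e. d_{-1,-1} = d_{-1,0} = d_{0,-1} = 0. Then ([0:1],[0:1]) is a singular point of the kernel curve Ē_t; moreover Δ₁(x,1) = α₂x² + α₃x³ + α₄x⁴ and Δ₂(y,1) = β₂y² + β₃y³ + β₄y⁴, with α₂ = β₂ ≠ 0, α₃² - 4α₂α₄ ≠ 0 and β₃² - 4β₂β₄ ≠ 0; in particular Δ₁ (respectively Δ₂) has a double root at [0:1] and its two remaining roots in ℙ¹(ℂ) are simple, distinct from each other and distinct from [0:1]. -/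
open MvPolynomial

noncomputable section

variable (d : ℤ → ℤ → ℝ) (t : ℝ)

/-!
In the first family, `Δ₁ = x₀²(α₂x₁² + α₃x₀x₁ + α₄x₀²)` and likewise for `Δ₂`, by expansion.
As a polynomial in `t` over the field generated by the weights, `α₂` has constant term `1`, and
`α₃² - 4α₂α₄ = 16 d₁,₋₁ t² (d₁₁(1 - d₀₀t)² + d₁₀d₀₁ t(1 - d₀₀t) + (d₀₁²d₁,₋₁ + d₁₀²d₋₁,₁ - 4d₁₁d₁,₋₁d₋₁,₁) t²)`.
Since `t` is transcendental, the latter vanishes only if all its coefficients do, which for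
nonnegative weights with `d₁,₋₁, d₋₁,₁ > 0` forces `d₁₀ = d₀₁ = d₁₁ = 0`. Irreducibility of `K`
rules this out: then `K` is a binary quadratic form, which splits over `ℂ`; and if `d₁,₋₁ = 0`
(resp. `d₋₁,₁ = 0`) then `y` (resp. `x`) divides `K`. Finally, if `(bX - aY)²` divides the quartic,
both partial derivatives vanish at `(a, b)`, and a combination of them is `(α₃² - 4α₂α₄)a⁴`.
-/

section PolynomialsInT

open scoped Polynomial

variable {K : Type*} [Field K]

/- With `a, c, e, f, g, m` standing for `d₁₀, d₀₀, d₀₁, d₁,₋₁, d₁₁, d₋₁,₁`, these are `α₂, α₃, α₄`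
and `α₃² - 4α₂α₄` as polynomials in `t`. -/
def alpha2Poly (c f m : K) : K[X] :=
  (1 - Polynomial.C c * Polynomial.X) ^ 2 - 4 * Polynomial.C m * Polynomial.C f * Polynomial.X ^ 2

def alpha3Poly (a c e f : K) : K[X] :=
  -2 * Polynomial.C a * Polynomial.X * (1 - Polynomial.C c * Polynomial.X) -
    4 * Polynomial.C e * Polynomial.C f * Polynomial.X ^ 2

def alpha4Poly (a f g : K) : K[X] :=
  (Polynomial.C a ^ 2 - 4 * Polynomial.C g * Polynomial.C f) * Polynomial.X ^ 2

def firstFamilyDisc (a c e f g m : K) : K[X] :=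
  alpha3Poly a c e f ^ 2 - 4 * alpha2Poly c f m * alpha4Poly a f g

lemma alpha2Poly_ne_zero (c f m : K) : alpha2Poly c f m ≠ 0 := fun h => by
  simpa [alpha2Poly] using congrArg (Polynomial.eval 0) h

lemma firstFamilyDisc_eq (a c e f g m : K) :
    firstFamilyDisc a c e f g m =
      Polynomial.C (16 * f * g) * Polynomial.X ^ 2 +
        Polynomial.C (16 * f * (a * e - 2 * c * g)) * Polynomial.X ^ 3 +
        Polynomial.C (16 * f * (e ^ 2 * f + a ^ 2 * m + c ^ 2 * g - a * c * e - 4 * f * g * m)) *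
          Polynomial.X ^ 4 := by
  simp only [firstFamilyDisc, alpha2Poly, alpha3Poly, alpha4Poly, map_mul, map_sub, map_add,
    map_pow, map_ofNat]
  ring

lemma firstFamilyDisc_ne_zero [LinearOrder K] [IsStrictOrderedRing K] {a c e f g m : K}
    (hf : 0 < f) (hm : 0 < m) (h : a ≠ 0 ∨ e ≠ 0 ∨ g ≠ 0) : firstFamilyDisc a c e f g m ≠ 0 := by
  intro h0
  have coeff_eq_zero (n : ℕ) :=
    congrArg (Polynomial.coeff · n) (firstFamilyDisc_eq a c e f g m ▸ h0)
  have h2 := coeff_eq_zero 2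
  have h3 := coeff_eq_zero 3
  have h4 := coeff_eq_zero 4
  simp only [Polynomial.coeff_add, Polynomial.coeff_C_mul_X_pow, Polynomial.coeff_zero] at h2 h3 h4
  norm_num [hf.ne'] at h2 h3 h4
  subst h2
  have hae : a * e = 0 := by linear_combination h3
  have hsq : e ^ 2 * f + a ^ 2 * m = 0 := by linear_combination h4 + c * hae
  have hef : e ^ 2 * f = 0 := by
    nlinarith [mul_nonneg (sq_nonneg e) hf.le, mul_nonneg (sq_nonneg a) hm.le]
  have ham : a ^ 2 * m = 0 := by linear_combination hsq - hef
  simp [hf.ne', hm.ne'] at hef ham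
  simp [hef, ham] at h

lemma Transcendental.aeval_ne_zero {R A : Type*} [CommRing R] [Ring A] [Algebra R A] {x : A}
    (hx : Transcendental R x) {p : R[X]} (hp : p ≠ 0) : Polynomial.aeval x p ≠ 0 :=
  fun h0 => hp (transcendental_iff.1 hx p h0)

end PolynomialsInT

lemma not_irreducible_of_eq_mul_of_constantCoeff {σ R : Type*} [CommSemiring R] [Nontrivial R]
    {p q r : MvPolynomial σ R} (h : p = q * r) (hq : constantCoeff q = 0)
    (hr : constantCoeff r = 0) : ¬ Irreducible p := fun hp => by
  rcases hp.isUnit_or_isUnit h with hu | hu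
  · exact not_isUnit_zero (hq ▸ hu.map constantCoeff)
  · exact not_isUnit_zero (hr ▸ hu.map constantCoeff)

lemma not_irreducible_binary_quadratic_form {k : Type*} [Field k] [IsAlgClosed k] (A B D : k) :
    ¬ Irreducible (C A * X 0 ^ 2 + C B * X 0 * X 1 + C D * X 1 ^ 2 : MvPolynomial (Fin 2) k) := by
  by_cases hA : A = 0
  · refine not_irreducible_of_eq_mul_of_constantCoeff (q := X 1) (r := C B * X 0 + C D * X 1) ?_
      (by simp) (by simp)
    rw [hA, C_0]
    ring
  obtain ⟨r, hr⟩ := IsAlgClosed.exists_root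
    (Polynomial.C A * Polynomial.X ^ 2 + Polynomial.C B * Polynomial.X + Polynomial.C D)
    (by rw [Polynomial.degree_quadratic hA]; decide)
  simp only [Polynomial.IsRoot, Polynomial.eval_add, Polynomial.eval_mul, Polynomial.eval_C,
    Polynomial.eval_pow, Polynomial.eval_X] at hr
  -- Vieta: the other root is `-B / A - r`.
  have hsum : A * (r + (-B / A - r)) = -B := by field_simp; ring
  have hprod : A * (r * (-B / A - r)) = D := by field_simp; linear_combination -hr
  refine not_irreducible_of_eq_mul_of_constantCoeff (q := C A * (X 0 - C r * X 1))
    (r := X 0 - C (-B / A - r) * X 1) ?_ (by simp) (by simp)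
  have hsum' := congrArg (C (σ := Fin 2)) hsum
  have hprod' := congrArg (C (σ := Fin 2)) hprod
  simp only [map_mul, map_add, map_neg] at hsum' hprod'
  linear_combination (X 0 * X 1) * hsum' - X 1 ^ 2 * hprod'

lemma eval_pderiv_eq_zero_of_sq_dvd {σ R : Type*} [CommRing R] {ℓ p : MvPolynomial σ R}
    {v : σ → R} (hℓ : eval v ℓ = 0) (h : ℓ ^ 2 ∣ p) (i : σ) : eval v (pderiv i p) = 0 := by
  obtain ⟨q, rfl⟩ := h
  simp [hℓ]

section BinaryQuartic

variable {k : Type*} [Field k] (a₂ a₃ a₄ : k)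

lemma sq_X_dvd_quartic :
    (X 0) ^ 2 ∣ (C a₂ * X 0 ^ 2 * X 1 ^ 2 + C a₃ * X 0 ^ 3 * X 1 + C a₄ * X 0 ^ 4 :
      MvPolynomial (Fin 2) k) :=
  ⟨C a₂ * X 1 ^ 2 + C a₃ * X 0 * X 1 + C a₄ * X 0 ^ 2, by ring⟩

lemma not_X_pow_three_dvd_quartic (ha₂ : a₂ ≠ 0) :
    ¬ (X 0) ^ 3 ∣ (C a₂ * X 0 ^ 2 * X 1 ^ 2 + C a₃ * X 0 ^ 3 * X 1 + C a₄ * X 0 ^ 4 :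
      MvPolynomial (Fin 2) k) := by
  rintro ⟨q, hq⟩
  have hcancel : (X 0) ^ 2 * (C a₂ * X 1 ^ 2) =
      (X 0) ^ 2 * (X 0 * (q - C a₃ * X 1 - C a₄ * X 0) : MvPolynomial (Fin 2) k) := by
    linear_combination hq
  have := congrArg (eval ![0, 1]) (mul_left_cancel₀ (pow_ne_zero 2 (X_ne_zero 0)) hcancel)
  simp [ha₂] at this

lemma eq_zero_of_sq_dvd_quartic (hdisc : a₃ ^ 2 - 4 * a₂ * a₄ ≠ 0) {a b : k}
    (h : (C b * X 0 - C a * X 1) ^ 2 ∣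
      (C a₂ * X 0 ^ 2 * X 1 ^ 2 + C a₃ * X 0 ^ 3 * X 1 + C a₄ * X 0 ^ 4 :
        MvPolynomial (Fin 2) k)) : a = 0 := by
  have hℓ : eval ![a, b] (C b * X 0 - C a * X 1) = 0 := by simp [mul_comm]
  have hx := eval_pderiv_eq_zero_of_sq_dvd hℓ h 0
  have hy := eval_pderiv_eq_zero_of_sq_dvd hℓ h 1
  simp [pderiv_X] at hx hy
  have : (a₃ ^ 2 - 4 * a₂ * a₄) * a ^ 4 = 0 := by
    linear_combination (a₃ * a + a₂ * b) * hy - a₂ * a * hx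
  simpa [hdisc] using this

end BinaryQuartic

def weightField : Subfield ℝ :=
  Subfield.closure {x : ℝ | ∃ i ∈ ({-1, 0, 1} : Set ℤ), ∃ j ∈ ({-1, 0, 1} : Set ℤ), x = d i j}

def weight (i j : ℤ) (hi : i ∈ ({-1, 0, 1} : Set ℤ) := by simp)
    (hj : j ∈ ({-1, 0, 1} : Set ℤ) := by simp) : weightField d :=
  ⟨d i j, Subfield.subset_closure ⟨i, hi, j, hj, rfl⟩⟩

variable {d t}

lemma WalkHyp.transcendental (h : WalkHyp d t) : Transcendental (weightField d) t := by
  refine transcendental_iff.2 fun p hp =>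
    Polynomial.map_injective (weightField d).subtype Subtype.val_injective ?_
  rw [Polynomial.map_zero]
  refine h.2.2.2 _ (fun n => by simp only [Polynomial.coeff_map]; exact (p.coeff n).2) ?_
  rwa [Polynomial.eval_map, ← Subfield.algebraMap_ofSubfield, ← Polynomial.aeval_def]

lemma alpha2_ne_zero (h : WalkHyp d t) : alpha2 d t ≠ 0 := by
  convert h.transcendental.aeval_ne_zero
    (alpha2Poly_ne_zero (weight d 0 0) (weight d 1 (-1)) (weight d (-1) 1)) using 1
  simp [alpha2Poly, alpha2, weight, Subfield.algebraMap_ofSubfield, map_ofNat]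
  ring

lemma alpha3_sq_sub_four_mul_alpha2_mul_alpha4_ne_zero (h : WalkHyp d t) (hf : 0 < d 1 (-1))
    (hm : 0 < d (-1) 1) (hnc : d 1 0 ≠ 0 ∨ d 0 1 ≠ 0 ∨ d 1 1 ≠ 0) :
    alpha3 d t ^ 2 - 4 * alpha2 d t * alpha4 d t ≠ 0 := by
  convert h.transcendental.aeval_ne_zero (firstFamilyDisc_ne_zero (a := weight d 1 0)
    (c := weight d 0 0) (e := weight d 0 1) (f := weight d 1 (-1)) (g := weight d 1 1)
    (m := weight d (-1) 1) hf hm (by simpa [weight, ← Subtype.coe_ne_coe] using hnc)) using 1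
  simp [firstFamilyDisc, alpha2Poly, alpha3Poly, alpha4Poly, alpha2, alpha3, alpha4, weight,
    Subfield.algebraMap_ofSubfield, map_ofNat]
  ring

/- `β₃, β₄` are `α₃, α₄` of the model reflected in the diagonal, which swaps `d₁₀ ↔ d₀₁` and
`d₁,₋₁ ↔ d₋₁,₁`. -/
lemma beta3_sq_sub_four_mul_alpha2_mul_beta4_ne_zero (h : WalkHyp d t) (hf : 0 < d 1 (-1))
    (hm : 0 < d (-1) 1) (hnc : d 1 0 ≠ 0 ∨ d 0 1 ≠ 0 ∨ d 1 1 ≠ 0) :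
    beta3 d t ^ 2 - 4 * alpha2 d t * beta4 d t ≠ 0 := by
  convert h.transcendental.aeval_ne_zero (firstFamilyDisc_ne_zero (a := weight d 0 1)
    (c := weight d 0 0) (e := weight d 1 0) (f := weight d (-1) 1) (g := weight d 1 1)
    (m := weight d 1 (-1)) hm hf
    (by simpa [weight, ← Subtype.coe_ne_coe, or_left_comm] using hnc)) using 1
  simp [firstFamilyDisc, alpha2Poly, alpha3Poly, alpha4Poly, alpha2, beta3, beta4, weight,
    Subfield.algebraMap_ofSubfield, map_ofNat]
  ring

lemma kernelK_eq_of_first_family (h1 : d (-1) (-1) = 0) (h2 : d (-1) 0 = 0) (h3 : d 0 (-1) = 0) :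
    kernelK d t = X 0 * X 1 - C (t : ℂ) * (C (d 1 (-1) : ℂ) * X 0 ^ 2 + C (d (-1) 1 : ℂ) * X 1 ^ 2 +
      C (d 0 0 : ℂ) * X 0 * X 1 + C (d 1 0 : ℂ) * X 0 ^ 2 * X 1 + C (d 0 1 : ℂ) * X 0 * X 1 ^ 2 +
      C (d 1 1 : ℂ) * X 0 ^ 2 * X 1 ^ 2) := by
  simp only [kernelK, Finset.sum_range_succ, Finset.sum_range_zero, Nat.cast_zero, Nat.cast_one,
    Nat.cast_ofNat, zero_sub, sub_self, show (2 : ℤ) - 1 = 1 by norm_num, h1, h2, h3,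
    Complex.ofReal_zero, C_0]
  ring

lemma weights_of_irreducible_kernelK (h1 : d (-1) (-1) = 0) (h2 : d (-1) 0 = 0)
    (h3 : d 0 (-1) = 0) (hirr : Irreducible (kernelK d t)) :
    d 1 (-1) ≠ 0 ∧ d (-1) 1 ≠ 0 ∧ (d 1 0 ≠ 0 ∨ d 0 1 ≠ 0 ∨ d 1 1 ≠ 0) := by
  rw [kernelK_eq_of_first_family h1 h2 h3] at hirr
  refine ⟨fun hf => ?_, fun hm => ?_, ?_⟩
  · refine not_irreducible_of_eq_mul_of_constantCoeff (q := X 1)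
      (r := X 0 - C (t : ℂ) * (C (d (-1) 1 : ℂ) * X 1 + C (d 0 0 : ℂ) * X 0 +
        C (d 1 0 : ℂ) * X 0 ^ 2 + C (d 0 1 : ℂ) * X 0 * X 1 + C (d 1 1 : ℂ) * X 0 ^ 2 * X 1))
      ?_ (by simp) (by simp) hirr
    rw [hf, Complex.ofReal_zero, C_0]
    ring
  · refine not_irreducible_of_eq_mul_of_constantCoeff (q := X 0)
      (r := X 1 - C (t : ℂ) * (C (d 1 (-1) : ℂ) * X 0 + C (d 0 0 : ℂ) * X 1 +
        C (d 1 0 : ℂ) * X 0 * X 1 + C (d 0 1 : ℂ) * X 1 ^ 2 + C (d 1 1 : ℂ) * X 0 * X 1 ^ 2))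
      ?_ (by simp) (by simp) hirr
    rw [hm, Complex.ofReal_zero, C_0]
    ring
  · by_contra! ⟨ha, he, hg⟩
    exact not_irreducible_binary_quadratic_form (-(t * d 1 (-1) : ℂ)) (1 - t * d 0 0)
      (-(t * d (-1) 1)) (by convert hirr using 1; simp [ha, he, hg]; ring)

lemma singularAt_zero_one_zero_one (h1 : d (-1) (-1) = 0) (h2 : d (-1) 0 = 0)
    (h3 : d 0 (-1) = 0) : SingularAt d t 0 1 0 1 := by
  refine ⟨by simp [OnKernelCurve, kernelKbar, Finset.sum_range_succ, h1, h2, h3], fun k => ?_⟩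
  fin_cases k <;> simp [kernelKbar, Finset.sum_range_succ, h1, h2, h3, pderiv_X]

lemma delta1_eq_of_first_family (h1 : d (-1) (-1) = 0) (h2 : d (-1) 0 = 0) (h3 : d 0 (-1) = 0) :
    Delta1 d t =
      C (alpha2 d t : ℂ) * X 0 ^ 2 * X 1 ^ 2 + C (alpha3 d t : ℂ) * X 0 ^ 3 * X 1 +
        C (alpha4 d t : ℂ) * X 0 ^ 4 := by
  simp only [Delta1, Abar1, Bbar1, Cbar1, alpha2, alpha3, alpha4, h1, h2, h3]
  push_cast
  simp only [map_sub, map_add, map_mul, map_pow, map_one, map_ofNat, map_zero]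
  ring

lemma delta2_eq_of_first_family (h1 : d (-1) (-1) = 0) (h2 : d (-1) 0 = 0) (h3 : d 0 (-1) = 0) :
    Delta2 d t =
      C (alpha2 d t : ℂ) * X 0 ^ 2 * X 1 ^ 2 + C (beta3 d t : ℂ) * X 0 ^ 3 * X 1 +
        C (beta4 d t : ℂ) * X 0 ^ 4 := by
  simp only [Delta2, Abar2, Bbar2, Cbar2, alpha2, beta3, beta4, h1, h2, h3]
  push_cast
  simp only [map_sub, map_add, map_mul, map_pow, map_one, map_ofNat, map_zero]
  ring

/-- for a nondegenerate model in the first family of (G0), i.e. with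
`d_{-1,-1} = d_{-1,0} = d_{0,-1} = 0`: `([0:1],[0:1])` is a singular point of `Ē_t`;
`Δ₁ = α₂x₀²x₁² + α₃x₀³x₁ + α₄x₀⁴` and `Δ₂ = β₂y₀²y₁² + β₃y₀³y₁ + β₄y₀⁴` with
`α₂ = β₂ ≠ 0`, `α₃² - 4α₂α₄ ≠ 0`, `β₃² - 4β₂β₄ ≠ 0`; in particular `Δ₁` (resp. `Δ₂`)
has a double root at `[0:1]` of multiplicity exactly two, and no other double root. -/
theorem first_G0_family_discriminants (h : WalkHyp d t) (hnd : ¬ Degenerate d t)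
    (h1 : d (-1) (-1) = 0) (h2 : d (-1) 0 = 0) (h3 : d 0 (-1) = 0) :
    SingularAt d t 0 1 0 1 ∧
    Delta1 d t =
      C ((alpha2 d t : ℝ) : ℂ) * X 0 ^ 2 * X 1 ^ 2 +
        C ((alpha3 d t : ℝ) : ℂ) * X 0 ^ 3 * X 1 + C ((alpha4 d t : ℝ) : ℂ) * X 0 ^ 4 ∧
    Delta2 d t =
      C ((alpha2 d t : ℝ) : ℂ) * X 0 ^ 2 * X 1 ^ 2 +
        C ((beta3 d t : ℝ) : ℂ) * X 0 ^ 3 * X 1 + C ((beta4 d t : ℝ) : ℂ) * X 0 ^ 4 ∧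
    alpha2 d t ≠ 0 ∧
    alpha3 d t ^ 2 - 4 * alpha2 d t * alpha4 d t ≠ 0 ∧
    beta3 d t ^ 2 - 4 * alpha2 d t * beta4 d t ≠ 0 ∧
    IsDoubleRootAt 0 1 (Delta1 d t) ∧ ¬ ((X 0 : MvPolynomial (Fin 2) ℂ) ^ 3 ∣ Delta1 d t) ∧
    (∀ a b : ℂ, (a, b) ≠ (0, 0) → IsDoubleRootAt a b (Delta1 d t) → a = 0) ∧
    IsDoubleRootAt 0 1 (Delta2 d t) ∧ ¬ ((X 0 : MvPolynomial (Fin 2) ℂ) ^ 3 ∣ Delta2 d t) ∧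
    (∀ a b : ℂ, (a, b) ≠ (0, 0) → IsDoubleRootAt a b (Delta2 d t) → a = 0) := by
  obtain ⟨hf₀, hm₀, hnc⟩ := weights_of_irreducible_kernelK h1 h2 h3 (not_not.1 (not_or.1 hnd).1)
  have hf : 0 < d 1 (-1) := (h.1 1 (by simp) (-1) (by simp)).1.lt_of_ne' hf₀
  have hm : 0 < d (-1) 1 := (h.1 (-1) (by simp) 1 (by simp)).1.lt_of_ne' hm₀
  have hα₂ := alpha2_ne_zero h
  have hΔ₁ := alpha3_sq_sub_four_mul_alpha2_mul_alpha4_ne_zero h hf hm hnc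
  have hΔ₂ := beta3_sq_sub_four_mul_alpha2_mul_beta4_ne_zero h hf hm hnc
  have hα₂' : (alpha2 d t : ℂ) ≠ 0 := Complex.ofReal_ne_zero.2 hα₂
  rw [delta1_eq_of_first_family h1 h2 h3, delta2_eq_of_first_family h1 h2 h3]
  refine ⟨singularAt_zero_one_zero_one h1 h2 h3, rfl, rfl, hα₂, hΔ₁, hΔ₂,
    by simpa [IsDoubleRootAt] using sq_X_dvd_quartic _ _ _, not_X_pow_three_dvd_quartic _ _ _ hα₂',
    fun a b _ => eq_zero_of_sq_dvd_quartic _ _ _ (by exact_mod_cast hΔ₁),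
    by simpa [IsDoubleRootAt] using sq_X_dvd_quartic _ _ _, not_X_pow_three_dvd_quartic _ _ _ hα₂',
    fun a b _ => eq_zero_of_sq_dvd_quartic _ _ _ (by exact_mod_cast hΔ₂)⟩

end
end

section
/- For a nondegenerate model of walk and a point P = ([a:b],[c:d]) of the kernel curve Ē_t: P is the unique point of Ē_t whose first coordinate equals [a:b] if and only if Δ₁(a,b) = 0; and P is the unique point of Ē_t whose second coordinate equals [c:d] if and only if Δ₂(c,d) = 0. (Uniqueness in the fiber expresses that P is fixed by the vertical switch ι₁, respectively the horizontal switch ι₂, of Ē_t, where {P, ι₁(P)} = Ē_t ∩ ({[a:b]}×ℙ¹(ℂ)) and {P, ι₂(P)} = Ē_t ∩ (ℙ¹(ℂ)×{[c:d]}).) -/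
open MvPolynomial

noncomputable section

variable (d : ℤ → ℤ → ℝ) (t : ℝ)

/-!
Over a point `[a:b]` of the first factor, the fiber of `Ē_t` is the zero set in `ℙ¹` of the binary
quadratic form `Ā₁(a,b) y₀² + B̄₁(a,b) y₀y₁ + C̄₁(a,b) y₁²`, whose discriminant is `Δ₁(a,b)`. Over
`ℂ`, a nonzero binary quadratic form has a single zero in `ℙ¹` exactly when its discriminant
vanishes. The form is nonzero for a nondegenerate model: a common zero `[a:b]` of `Ā₁, B̄₁, C̄₁`
means either `b = 0`, and then `K` has degree `≤ 1` in `x`, or `x - a/b` divides `K`, which for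
irreducible `K` forces `K` to be constant in `y`. The statement for the horizontal switch is the one
for the vertical switch applied to the transposed weights `d_{j,i}`.
-/

section BinaryQuadraticForm

variable {K : Type*} [Field K]

lemma det_eq_zero_of_linear_form_eq_zero {p q c e c' e' : K} (hpq : (p, q) ≠ (0, 0))
    (h : p * c + q * e = 0) (h' : p * c' + q * e' = 0) : c * e' - c' * e = 0 := by
  by_contra hdet
  have hp : p * (c * e' - c' * e) = 0 := by linear_combination e' * h - e * h'
  have hq : q * (c * e' - c' * e) = 0 := by linear_combination c * h' - c' * h
  exact hpq (by simp [(mul_eq_zero.1 hp).resolve_right hdet, (mul_eq_zero.1 hq).resolve_right hdet])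

lemma exists_eq_mul_of_det_eq_zero {c e c' e' : K} (hce : (c, e) ≠ (0, 0))
    (hce' : (c', e') ≠ (0, 0)) (hdet : c * e' - c' * e = 0) :
    ∃ mu : K, mu ≠ 0 ∧ c' = mu * c ∧ e' = mu * e := by
  rcases eq_or_ne c 0 with rfl | hc
  · have he : e ≠ 0 := by simpa using hce
    have hc' : c' = 0 := by simpa [he] using hdet
    have he' : e' ≠ 0 := by simpa [hc'] using hce'
    exact ⟨e' / e, div_ne_zero he' he, by simp [hc'], by field_simp⟩
  · have hc' : c' ≠ 0 := by
      rintro rfl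
      exact hce' (by simpa [hc] using hdet)
    exact ⟨c' / c, div_ne_zero hc' hc, by field_simp, by field_simp; linear_combination hdet⟩

variable [NeZero (2 : K)]

theorem exists_eq_mul_of_discr_eq_zero {A B C c e c' e' : K}
    (hABC : ¬(A = 0 ∧ B = 0 ∧ C = 0)) (hdisc : B ^ 2 - 4 * A * C = 0)
    (hce : (c, e) ≠ (0, 0)) (hQ : A * c ^ 2 + B * c * e + C * e ^ 2 = 0)
    (hce' : (c', e') ≠ (0, 0)) (hQ' : A * c' ^ 2 + B * c' * e' + C * e' ^ 2 = 0) :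
    ∃ mu : K, mu ≠ 0 ∧ c' = mu * c ∧ e' = mu * e := by
  -- `(2Ax + By)² = y²Δ + 4A·Q(x, y)` and `(Bx + 2Cy)² = x²Δ + 4C·Q(x, y)`
  have gradient {x y : K} (h : A * x ^ 2 + B * x * y + C * y ^ 2 = 0) :
      2 * A * x + B * y = 0 ∧ B * x + 2 * C * y = 0 :=
    ⟨pow_eq_zero_iff two_ne_zero |>.1 (by linear_combination y ^ 2 * hdisc + 4 * A * h),
      pow_eq_zero_iff two_ne_zero |>.1 (by linear_combination x ^ 2 * hdisc + 4 * C * h)⟩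
  refine exists_eq_mul_of_det_eq_zero hce hce' ?_
  by_cases hAB : (2 * A, B) = (0, 0)
  · obtain ⟨hA, hB⟩ : A = 0 ∧ B = 0 := by simpa [two_ne_zero] using hAB
    have hBC : (B, 2 * C) ≠ (0, 0) := by simpa [hB, two_ne_zero] using fun hC => hABC ⟨hA, hB, hC⟩
    exact det_eq_zero_of_linear_form_eq_zero hBC (gradient hQ).2 (gradient hQ').2
  · exact det_eq_zero_of_linear_form_eq_zero hAB (gradient hQ).1 (gradient hQ').1

lemma exists_zeros_det_ne_zero_of_discr_ne_zero [IsAlgClosed K] {A B C : K}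
    (hdisc : B ^ 2 - 4 * A * C ≠ 0) :
    ∃ c₁ e₁ c₂ e₂ : K, A * c₁ ^ 2 + B * c₁ * e₁ + C * e₁ ^ 2 = 0 ∧
      A * c₂ ^ 2 + B * c₂ * e₂ + C * e₂ ^ 2 = 0 ∧ c₁ * e₂ - c₂ * e₁ ≠ 0 := by
  rcases eq_or_ne A 0 with rfl | hA
  · refine ⟨1, 0, C, -B, by ring, by ring, ?_⟩
    simpa using hdisc
  · obtain ⟨s, hs⟩ := IsAlgClosed.exists_pow_nat_eq (B ^ 2 - 4 * A * C) two_pos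
    have hs0 : s ≠ 0 := by
      rintro rfl
      exact hdisc (by simpa using hs.symm)
    refine ⟨-B + s, 2 * A, -B - s, 2 * A, by linear_combination A * hs,
      by linear_combination A * hs, ?_⟩
    have h4 : (4 : K) ≠ 0 := by simpa [show (4 : K) = 2 * 2 by norm_num] using two_ne_zero
    calc (-B + s) * (2 * A) - (-B - s) * (2 * A) = 4 * A * s := by ring
      _ ≠ 0 := by simp [h4, hA, hs0]

theorem binary_quadratic_unique_zero_iff [IsAlgClosed K] {A B C c e : K}
    (hABC : ¬(A = 0 ∧ B = 0 ∧ C = 0)) (hce : (c, e) ≠ (0, 0))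
    (hQ : A * c ^ 2 + B * c * e + C * e ^ 2 = 0) :
    (∀ c' e' : K, (c', e') ≠ (0, 0) → A * c' ^ 2 + B * c' * e' + C * e' ^ 2 = 0 →
        ∃ mu : K, mu ≠ 0 ∧ c' = mu * c ∧ e' = mu * e) ↔
      B ^ 2 - 4 * A * C = 0 := by
  refine ⟨fun huniq => ?_, fun hdisc c' e' =>
    exists_eq_mul_of_discr_eq_zero hABC hdisc hce hQ⟩
  by_contra hdisc
  obtain ⟨c₁, e₁, c₂, e₂, h₁, h₂, hdet⟩ := exists_zeros_det_ne_zero_of_discr_ne_zero hdisc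
  obtain ⟨m₁, -, rfl, rfl⟩ := huniq c₁ e₁ (by rintro ⟨⟩; simp_all) h₁
  obtain ⟨m₂, -, rfl, rfl⟩ := huniq c₂ e₂ (by rintro ⟨⟩; simp_all) h₂
  exact hdet (by ring)

end BinaryQuadraticForm

section MvPolynomial

variable {σ R : Type*}

lemma X_sub_C_dvd_of_quadratic_eq_zero [CommRing R] (i : σ) {u v w α : R}
    (h : u + v * α + w * α ^ 2 = 0) :
    X i - C α ∣ C u + C v * X i + C w * X i ^ 2 :=
  ⟨C v + C w * (X i + C α), by
    have hC := congrArg (C : R → MvPolynomial σ R) h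
    simp only [map_add, map_mul, map_pow, map_zero] at hC
    linear_combination hC⟩

lemma degreeOf_C_add_C_mul_X_le [CommSemiring R] [Nontrivial R] (i : σ) (u v : R) :
    degreeOf i (C u + C v * X i) ≤ 1 := by
  refine (degreeOf_add_le _ _ _).trans (max_le (by simp [degreeOf_C]) ?_)
  exact (degreeOf_C_mul_le _ _ _).trans (by simp)

lemma degreeOf_eq_zero_of_irreducible_of_X_sub_C_dvd [Field R] {p : MvPolynomial σ R}
    (hp : Irreducible p) {i j : σ} (hij : i ≠ j) {α : R} (hdvd : X i - C α ∣ p) :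
    degreeOf j p = 0 := by
  obtain ⟨q, rfl⟩ := hdvd
  have hX : ¬IsUnit (X i - C α : MvPolynomial σ R) := fun hu => by
    simpa using hu.map (eval fun _ => α)
  obtain ⟨r, -, rfl⟩ := isUnit_iff_eq_C_of_isReduced.1 ((hp.isUnit_or_isUnit rfl).resolve_left hX)
  refine Nat.eq_zero_of_le_zero ((degreeOf_mul_le _ _ _).trans ?_)
  simpa [degreeOf_C, degreeOf_X_of_ne hij.symm] using degreeOf_sub_le j (X i) (C α)

end MvPolynomial

section KernelCurve

lemma eval_kernelKbar (a b c e : ℂ) :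
    eval ![a, b, c, e] (kernelKbar d t) =
      eval ![a, b] (Abar1 d t) * c ^ 2 + eval ![a, b] (Bbar1 d t) * c * e +
        eval ![a, b] (Cbar1 d t) * e ^ 2 := by
  simp [kernelKbar, Abar1, Bbar1, Cbar1, Finset.sum_range_succ]
  ring

lemma onKernelCurve_swap_iff {a b c e : ℂ} :
    OnKernelCurve (Function.swap d) t c e a b ↔ OnKernelCurve d t a b c e := by
  have heval : eval ![c, e, a, b] (kernelKbar (Function.swap d) t) =
      eval ![a, b, c, e] (kernelKbar d t) := by
    simp [kernelKbar, Finset.sum_range_succ]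
    ring
  rw [OnKernelCurve, OnKernelCurve, heval]

lemma kernelK_swap :
    kernelK (Function.swap d) t = rename (Equiv.swap 0 1) (kernelK d t) := by
  simp [kernelK, Finset.sum_range_succ]
  ring

lemma degenerate_swap_iff : Degenerate (Function.swap d) t ↔ Degenerate d t := by
  have hdeg (i : Fin 2) :
      degreeOf (Equiv.swap 0 1 i) (kernelK (Function.swap d) t) = degreeOf i (kernelK d t) := by
    rw [kernelK_swap, degreeOf_rename_of_injective (Equiv.injective _)]
  have hirr : Irreducible (kernelK (Function.swap d) t) ↔ Irreducible (kernelK d t) := by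
    rw [kernelK_swap]
    exact MulEquiv.irreducible_iff (renameEquiv ℂ (Equiv.swap 0 1))
  rw [Degenerate, Degenerate, hirr, ← hdeg 0, ← hdeg 1, Equiv.swap_apply_left,
    Equiv.swap_apply_right, or_comm (a := _ ≤ 1)]

lemma delta1_swap : Delta1 (Function.swap d) t = Delta2 d t := rfl

lemma kernelK_eq_quadratic_in_X1 :
    kernelK d t =
      (C (-t * d (-1) 1 : ℂ) + C (-t * d 0 1 : ℂ) * X 0 + C (-t * d 1 1 : ℂ) * X 0 ^ 2) * X 1 ^ 2 +
      (C (-t * d (-1) 0 : ℂ) + C (1 - t * d 0 0 : ℂ) * X 0 + C (-t * d 1 0 : ℂ) * X 0 ^ 2) * X 1 +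
      (C (-t * d (-1) (-1) : ℂ) + C (-t * d 0 (-1) : ℂ) * X 0 +
        C (-t * d 1 (-1) : ℂ) * X 0 ^ 2) := by
  simp [kernelK, Finset.sum_range_succ]
  ring

lemma degreeOf_zero_kernelK_le_one (h₁ : (t : ℂ) * d 1 1 = 0) (h₀ : (t : ℂ) * d 1 0 = 0)
    (hm : (t : ℂ) * d 1 (-1) = 0) : degreeOf 0 (kernelK d t) ≤ 1 := by
  have h01 : (0 : Fin 2) ≠ 1 := by decide
  rw [kernelK_eq_quadratic_in_X1]
  simp only [neg_mul, h₁, h₀, hm, neg_zero, map_zero, zero_mul, add_zero]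
  refine (degreeOf_add_le _ _ _).trans (max_le ((degreeOf_add_le _ _ _).trans (max_le ?_ ?_)) ?_)
  · rw [degreeOf_mul_X_pow_of_ne _ h01]
    exact degreeOf_C_add_C_mul_X_le _ _ _
  · rw [degreeOf_mul_X_of_ne _ h01]
    exact degreeOf_C_add_C_mul_X_le _ _ _
  · exact degreeOf_C_add_C_mul_X_le _ _ _

lemma degenerate_of_fiber_coeffs_eq_zero {a b : ℂ} (hab : (a, b) ≠ (0, 0))
    (hA : eval ![a, b] (Abar1 d t) = 0) (hB : eval ![a, b] (Bbar1 d t) = 0)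
    (hC : eval ![a, b] (Cbar1 d t) = 0) : Degenerate d t := by
  simp only [Abar1, Bbar1, Cbar1, eval_mul, eval_neg, eval_add, eval_sub, eval_C, eval_pow,
    eval_X, Matrix.cons_val_zero, Matrix.cons_val_one] at hA hB hC
  rcases eq_or_ne b 0 with rfl | hb
  · have ha : a ≠ 0 := by simpa using hab
    have hcoeff {w : ℂ} (h : w * a ^ 2 = 0) : w = 0 :=
      (mul_eq_zero.1 h).resolve_right (pow_ne_zero 2 ha)
    exact Or.inr (Or.inl (degreeOf_zero_kernelK_le_one d t (hcoeff (by linear_combination -hA))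
      (hcoeff (by linear_combination -hB)) (hcoeff (by linear_combination -hC))))
  · have hdvd : X 0 - C (a / b) ∣ kernelK d t := by
      rw [kernelK_eq_quadratic_in_X1]
      refine dvd_add (dvd_add (dvd_mul_of_dvd_left ?_ _) (dvd_mul_of_dvd_left ?_ _)) ?_ <;>
        refine X_sub_C_dvd_of_quadratic_eq_zero _ ?_ <;> field_simp
      · linear_combination hA
      · linear_combination hB
      · linear_combination hC
    rw [Degenerate, or_iff_not_imp_left, not_not]
    intro hirr
    have hdeg : degreeOf 1 (kernelK d t) = 0 :=
      degreeOf_eq_zero_of_irreducible_of_X_sub_C_dvd hirr (by decide) hdvd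
    exact Or.inr (hdeg.le.trans zero_le_one)

theorem vertical_fiber_unique_iff_delta1_eq_zero (hnd : ¬Degenerate d t) {a b c e : ℂ}
    (hab : (a, b) ≠ (0, 0)) (hce : (c, e) ≠ (0, 0)) (hon : OnKernelCurve d t a b c e) :
    (∀ c' e' : ℂ, (c', e') ≠ (0, 0) → OnKernelCurve d t a b c' e' →
        ∃ mu : ℂ, mu ≠ 0 ∧ c' = mu * c ∧ e' = mu * e) ↔
      eval ![a, b] (Delta1 d t) = 0 := by
  simp only [OnKernelCurve, eval_kernelKbar] at hon ⊢
  rw [Delta1, eval_sub, eval_mul, eval_mul, eval_pow, eval_ofNat]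
  exact binary_quadratic_unique_zero_iff
    (fun h => hnd (degenerate_of_fiber_coeffs_eq_zero d t hab h.1 h.2.1 h.2.2)) hce hon

end KernelCurve

theorem fixed_by_switches_iff_discriminant (hnd : ¬ Degenerate d t)
    (a b c e : ℂ) (hab : (a, b) ≠ (0, 0)) (hce : (c, e) ≠ (0, 0))
    (hon : OnKernelCurve d t a b c e) :
    ((∀ c' e' : ℂ, (c', e') ≠ (0, 0) → OnKernelCurve d t a b c' e' →
        ∃ mu : ℂ, mu ≠ 0 ∧ c' = mu * c ∧ e' = mu * e) ↔
      eval ![a, b] (Delta1 d t) = 0) ∧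
    ((∀ a' b' : ℂ, (a', b') ≠ (0, 0) → OnKernelCurve d t a' b' c e →
        ∃ lam : ℂ, lam ≠ 0 ∧ a' = lam * a ∧ b' = lam * b) ↔
      eval ![c, e] (Delta2 d t) = 0) :=
  ⟨vertical_fiber_unique_iff_delta1_eq_zero d t hnd hab hce hon, by
    rw [← delta1_swap]
    simpa only [onKernelCurve_swap_iff] using
      vertical_fiber_unique_iff_delta1_eq_zero (Function.swap d) t
        (mt (degenerate_swap_iff d t).1 hnd) hce hab ((onKernelCurve_swap_iff d t).2 hon)⟩

end
end

section
/- The discriminant Δ₂ has a double root at [1:0] ∈ ℙ¹(ℂ) — equivalently, the coefficients of y₀⁴ and of y₀³y₁ in Δ₂, namely t²(d_{0,1}² - 4d_{1,1}d_{-1,1}) and -2td_{0,1} + 2t²d_{0,0}d_{0,1} - 4t²d_{1,1}d_{-1,0} - 4t²d_{1,0}d_{-1,1}, both vanish — if and only if one of the following holds: d_{0,1} = d_{-1,1} = d_{-1,0} = 0, or d_{0,1} = d_{-1,1} = d_{1,1} = 0, or d_{0,1} = d_{1,1} = d_{1,0} = 0. -/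
open MvPolynomial

noncomputable section

variable (d : ℤ → ℤ → ℝ) (t : ℝ)

lemma dvd_iff_aux (c3 c4 : ℂ) (Q : MvPolynomial (Fin 2) ℂ)
    (P : MvPolynomial (Fin 2) ℂ)
    (hP : P = X 1 ^ 2 * Q + C c3 * X 0 ^ 3 * X 1 + C c4 * X 0 ^ 4) :
    (X 1 ^ 2 ∣ P) ↔ (c3 = 0 ∧ c4 = 0) := by
  constructor
  · intro hdvd
    have h2 : (X 1 : MvPolynomial (Fin 2) ℂ) ^ 2 ∣ C c3 * X 0 ^ 3 * X 1 + C c4 * X 0 ^ 4 := by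
      have heq : C c3 * X 0 ^ 3 * X 1 + C c4 * X 0 ^ 4 = P - X 1 ^ 2 * Q := by rw [hP]; ring
      rw [heq]
      exact dvd_sub hdvd (Dvd.intro _ rfl)
    let ψ : MvPolynomial (Fin 2) ℂ →ₐ[ℂ] Polynomial ℂ := aeval ![1, Polynomial.X]
    have h3 : (Polynomial.X : Polynomial ℂ) ^ 2 ∣ Polynomial.C c3 * Polynomial.X + Polynomial.C c4 := by
      have := map_dvd ψ h2
      simpa [ψ, aeval_X, Polynomial.algebraMap_eq] using this
    obtain ⟨s, hs⟩ := h3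
    have e0 : (Polynomial.C c3 * Polynomial.X + Polynomial.C c4).coeff 0 = 0 := by
      rw [hs, pow_two, mul_assoc, Polynomial.coeff_X_mul_zero]
    have e1 : (Polynomial.C c3 * Polynomial.X + Polynomial.C c4).coeff 1 = 0 := by
      rw [hs]
      rw [mul_comm, Polynomial.coeff_mul_X_pow']
      simp
    simp [Polynomial.coeff_C] at e0 e1
    exact ⟨e1, e0⟩
  · rintro ⟨h3, h4⟩
    exact ⟨Q, by rw [hP, h3, h4]; simp⟩

lemma delta2_key (d : ℤ → ℤ → ℝ) (t : ℝ) : Delta2 d t =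
    X 1 ^ 2 *
      (C (((t:ℂ))^2 * (d 0 (-1) : ℂ)^2 - 4*((t:ℂ))^2*(d 1 (-1):ℂ)*(d (-1) (-1):ℂ)) * X 1 ^ 2
       + C (-(2*((t:ℂ))*(d 0 (-1):ℂ)) + 2*((t:ℂ))^2*(d 0 0:ℂ)*(d 0 (-1):ℂ)
            - 4*((t:ℂ))^2*(d 1 (-1):ℂ)*(d (-1) 0:ℂ) - 4*((t:ℂ))^2*(d 1 0:ℂ)*(d (-1) (-1):ℂ)) * X 0 * X 1
       + C ((1 - ((t:ℂ))*(d 0 0:ℂ))^2 + 2*((t:ℂ))^2*(d 0 (-1):ℂ)*(d 0 1:ℂ)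
            - 4*((t:ℂ))^2*((d 1 (-1):ℂ)*(d (-1) 1:ℂ) + (d 1 0:ℂ)*(d (-1) 0:ℂ) + (d 1 1:ℂ)*(d (-1) (-1):ℂ))) * X 0 ^ 2)
    + C (-(2*((t:ℂ))*(d 0 1:ℂ)) + 2*((t:ℂ))^2*(d 0 0:ℂ)*(d 0 1:ℂ)
         - 4*((t:ℂ))^2*(d 1 1:ℂ)*(d (-1) 0:ℂ) - 4*((t:ℂ))^2*(d 1 0:ℂ)*(d (-1) 1:ℂ)) * X 0 ^ 3 * X 1
    + C (((t:ℂ))^2 * ((d 0 1:ℂ)^2 - 4*(d 1 1:ℂ)*(d (-1) 1:ℂ))) * X 0 ^ 4 := by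
  simp only [Delta2, Bbar2, Abar2, Cbar2, map_mul, map_add, map_sub, map_neg, map_pow, map_one,
    map_ofNat]
  ring

/-- `Δ₂` has a double root at `[1:0]` — equivalently, the coefficients of
`y₀⁴` and `y₀³y₁` in `Δ₂` both vanish — if and only if `d₀,₁ = d₋₁,₁ = d₋₁,₀ = 0`, or
`d₀,₁ = d₋₁,₁ = d₁,₁ = 0`, or `d₀,₁ = d₁,₁ = d₁,₀ = 0`. -/
theorem delta2_double_root_at_infinity (h : WalkHyp d t) :
    (IsDoubleRootAt 1 0 (Delta2 d t) ↔
      (t ^ 2 * ((d 0 1) ^ 2 - 4 * d 1 1 * d (-1) 1) = 0 ∧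
       -(2 * t * d 0 1) + 2 * t ^ 2 * d 0 0 * d 0 1 - 4 * t ^ 2 * d 1 1 * d (-1) 0 -
          4 * t ^ 2 * d 1 0 * d (-1) 1 = 0)) ∧
    (IsDoubleRootAt 1 0 (Delta2 d t) ↔
      ((d 0 1 = 0 ∧ d (-1) 1 = 0 ∧ d (-1) 0 = 0) ∨
       (d 0 1 = 0 ∧ d (-1) 1 = 0 ∧ d 1 1 = 0) ∨
       (d 0 1 = 0 ∧ d 1 1 = 0 ∧ d 1 0 = 0))) := by

  have hX : ((C (0:ℂ)) * X 0 - (C (1:ℂ)) * X (1:Fin 2)) ^ 2 = X 1 ^ 2 := by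
    simp [neg_sq]
  have hc4 : (((t:ℂ))^2 * ((d 0 1:ℂ)^2 - 4*(d 1 1:ℂ)*(d (-1) 1:ℂ)) = 0) ↔
      (t ^ 2 * ((d 0 1) ^ 2 - 4 * d 1 1 * d (-1) 1) = 0) := by
    rw [show ((t:ℂ))^2 * ((d 0 1:ℂ)^2 - 4*(d 1 1:ℂ)*(d (-1) 1:ℂ)) =
        (((t ^ 2 * ((d 0 1) ^ 2 - 4 * d 1 1 * d (-1) 1) : ℝ)) : ℂ) by push_cast; ring,
      Complex.ofReal_eq_zero]
  have hc3 : ((-(2*((t:ℂ))*(d 0 1:ℂ)) + 2*((t:ℂ))^2*(d 0 0:ℂ)*(d 0 1:ℂ)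
         - 4*((t:ℂ))^2*(d 1 1:ℂ)*(d (-1) 0:ℂ) - 4*((t:ℂ))^2*(d 1 0:ℂ)*(d (-1) 1:ℂ)) = 0) ↔
      (-(2 * t * d 0 1) + 2 * t ^ 2 * d 0 0 * d 0 1 - 4 * t ^ 2 * d 1 1 * d (-1) 0 -
          4 * t ^ 2 * d 1 0 * d (-1) 1 = 0) := by
    rw [show (-(2*((t:ℂ))*(d 0 1:ℂ)) + 2*((t:ℂ))^2*(d 0 0:ℂ)*(d 0 1:ℂ)
         - 4*((t:ℂ))^2*(d 1 1:ℂ)*(d (-1) 0:ℂ) - 4*((t:ℂ))^2*(d 1 0:ℂ)*(d (-1) 1:ℂ)) =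
        (((-(2 * t * d 0 1) + 2 * t ^ 2 * d 0 0 * d 0 1 - 4 * t ^ 2 * d 1 1 * d (-1) 0 -
          4 * t ^ 2 * d 1 0 * d (-1) 1 : ℝ)) : ℂ) by push_cast; ring,
      Complex.ofReal_eq_zero]
  have main : IsDoubleRootAt 1 0 (Delta2 d t) ↔
      (t ^ 2 * ((d 0 1) ^ 2 - 4 * d 1 1 * d (-1) 1) = 0 ∧
       -(2 * t * d 0 1) + 2 * t ^ 2 * d 0 0 * d 0 1 - 4 * t ^ 2 * d 1 1 * d (-1) 0 -
          4 * t ^ 2 * d 1 0 * d (-1) 1 = 0) := by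
    unfold IsDoubleRootAt
    rw [hX, dvd_iff_aux _ _ _ _ (delta2_key d t), hc3, hc4, and_comm]
  refine ⟨main, main.trans ?_⟩
  obtain ⟨hbd, -, ⟨ht0, ht1⟩, -⟩ := h
  have m1 : (-1 : ℤ) ∈ ({-1, 0, 1} : Set ℤ) := by simp
  have m0 : (0 : ℤ) ∈ ({-1, 0, 1} : Set ℤ) := by simp
  have mp : (1 : ℤ) ∈ ({-1, 0, 1} : Set ℤ) := by simp
  have h01 := hbd 0 m0 1 mp
  have h00 := hbd 0 m0 0 m0
  have h11 := hbd 1 mp 1 mp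
  have hm11 := hbd (-1) m1 1 mp
  have hm10 := hbd (-1) m1 0 m0
  have h10 := hbd 1 mp 0 m0
  constructor
  · rintro ⟨hA, hB⟩
    have ht2 : (0:ℝ) < t ^ 2 := by positivity
    have hfac : (0:ℝ) < 1 - t * d 0 0 := by nlinarith [h00.1, h00.2]
    have hsum : 2 * t * d 0 1 * (1 - t * d 0 0) + 4 * t ^ 2 * (d 1 1 * d (-1) 0)
        + 4 * t ^ 2 * (d 1 0 * d (-1) 1) = 0 := by linear_combination -hB
    have e1 : (0:ℝ) ≤ 2 * t * d 0 1 * (1 - t * d 0 0) := by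
      have := h01.1
      positivity
    have e2 : (0:ℝ) ≤ 4 * t ^ 2 * (d 1 1 * d (-1) 0) := by
      have := mul_nonneg h11.1 hm10.1
      positivity
    have e3 : (0:ℝ) ≤ 4 * t ^ 2 * (d 1 0 * d (-1) 1) := by
      have := mul_nonneg h10.1 hm11.1
      positivity
    have z1 : 2 * t * d 0 1 * (1 - t * d 0 0) = 0 := by linarith
    have z2 : 4 * t ^ 2 * (d 1 1 * d (-1) 0) = 0 := by linarith
    have z3 : 4 * t ^ 2 * (d 1 0 * d (-1) 1) = 0 := by linarith
    have hd01 : d 0 1 = 0 := by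
      have hz : d 0 1 * (2 * t * (1 - t * d 0 0)) = 0 := by linear_combination z1
      rcases mul_eq_zero.mp hz with h' | h'
      · exact h'
      · exfalso; nlinarith
    have p2 : d 1 1 * d (-1) 0 = 0 := by
      rcases mul_eq_zero.mp z2 with h' | h'
      · exfalso; nlinarith
      · exact h'
    have p3 : d 1 0 * d (-1) 1 = 0 := by
      rcases mul_eq_zero.mp z3 with h' | h'
      · exfalso; nlinarith
      · exact h'
    have p1 : d 1 1 * d (-1) 1 = 0 := by
      rcases mul_eq_zero.mp hA with h' | h'
      · exfalso; nlinarith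
      · linear_combination (-(1:ℝ)/4) * h' + (d 0 1 / 4) * hd01
    rcases mul_eq_zero.mp p1 with h1 | h1
    · rcases mul_eq_zero.mp p3 with h3 | h3
      · exact Or.inr (Or.inr ⟨hd01, h1, h3⟩)
      · exact Or.inr (Or.inl ⟨hd01, h3, h1⟩)
    · rcases mul_eq_zero.mp p2 with h2 | h2
      · exact Or.inr (Or.inl ⟨hd01, h1, h2⟩)
      · exact Or.inl ⟨hd01, h1, h2⟩
  · rintro (⟨ha, hb, hc⟩ | ⟨ha, hb, hc⟩ | ⟨ha, hb, hc⟩) <;>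
      exact ⟨by simp only [ha, hb, hc]; ring, by simp only [ha, hb, hc]; ring⟩


end
end
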